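/- Let a : ℝ³ → ℝ³ be a C², 2π-periodic, divergence-free vector field (Σⱼ ∂ⱼaⱼ = 0), let w : ℝ³ → ℝ³ be C³ and 2π-periodic, and fix a coordinate direction k ∈ {1,2,3}. Then ∫_Q ((a·∇)w)·(∂ₖ∂ₖw) dx = ∫_Q (((∂ₖa)·∇)(∂ₖw))·w dx, where Q = [0,2π]³ and ∂ₖ denotes the partial derivative in the k-th coordinate. -/

import Mathlib

open Set Real MeasureTheory

/-- Spatial partial derivative `∂ᵢ f` of a scalar function on `ℝ³`. -/
noncomputable def pd (i : Fin 3) (f : (Fin 3 → ℝ) → ℝ) (x : Fin 3 → ℝ) : ℝ :=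
  fderiv ℝ f x (Pi.single i 1)

/-!
Write `F = ((a·∇)w)·∂ₖw` (`advectionFluxAlong`) and `Pⱼ = ½ aⱼ |∂ₖw|² + ∂ₖaⱼ (∂ₖw·w)`
(`advectionFlux`). The product rule, the symmetry of second derivatives and
`div a = div ∂ₖa = 0` give the pointwise identity
`((a·∇)w)·∂ₖ∂ₖw = (((∂ₖa)·∇)∂ₖw)·w + ∂ₖF - div P`.
`F` and `P` are periodic and `C¹`, and by the divergence theorem the integral of a partial
derivative of such a function over a period cell vanishes, since the contributions of opposite
faces cancel.
-/

section PartialDerivative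

variable {f g : (Fin 3 → ℝ) → ℝ} {x : Fin 3 → ℝ}

theorem contDiff_pd {n m : WithTop ℕ∞} (hf : ContDiff ℝ n f) (hmn : m + 1 ≤ n) (i : Fin 3) :
    ContDiff ℝ m (pd i f) :=
  (hf.fderiv_right hmn).clm_apply contDiff_const

theorem continuous_pd (hf : ContDiff ℝ 1 f) (i : Fin 3) : Continuous (pd i f) :=
  (hf.continuous_fderiv one_ne_zero).clm_apply continuous_const

theorem pd_const (i : Fin 3) (c : ℝ) : pd i (fun _ => c) x = 0 := by
  simp [pd]

theorem pd_add (i : Fin 3) (hf : DifferentiableAt ℝ f x) (hg : DifferentiableAt ℝ g x) :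
    pd i (fun y => f y + g y) x = pd i f x + pd i g x := by
  simp [pd, fderiv_fun_add hf hg]

theorem pd_mul (i : Fin 3) (hf : DifferentiableAt ℝ f x) (hg : DifferentiableAt ℝ g x) :
    pd i (fun y => f y * g y) x = pd i f x * g x + f x * pd i g x := by
  simp [pd, fderiv_fun_mul hf hg, mul_comm, add_comm]

theorem pd_sum {ι : Type*} (s : Finset ι) {F : ι → (Fin 3 → ℝ) → ℝ} (i : Fin 3)
    (hF : ∀ j ∈ s, DifferentiableAt ℝ (F j) x) :
    pd i (fun y => ∑ j ∈ s, F j y) x = ∑ j ∈ s, pd i (F j) x := by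
  simp [pd, fderiv_fun_sum hF]

theorem pd_comm (hf : ContDiff ℝ 2 f) (i j : Fin 3) : pd i (pd j f) x = pd j (pd i f) x := by
  have hdf : DifferentiableAt ℝ (fderiv ℝ f) x :=
    (hf.fderiv_right (m := 1) (by norm_num)).differentiable one_ne_zero x
  have hsymm := hf.contDiffAt.isSymmSndFDerivAt (x := x) (by norm_num)
  unfold pd
  simpa [fderiv_clm_apply hdf (differentiableAt_const _)] using hsymm _ _

theorem Function.Periodic.pd {c : Fin 3 → ℝ} (hf : Function.Periodic f c) (i : Fin 3) :
    Function.Periodic (pd i f) c := fun x => by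
  unfold _root_.pd
  rw [← fderiv_comp_add_right, funext hf]

end PartialDerivative

theorem Fin.insertNth_add_single {n : ℕ} {M : Type*} [AddMonoid M] (i : Fin (n + 1)) (x c : M)
    (p : Fin n → M) :
    i.insertNth (x + c) p = i.insertNth x p + Pi.single (M := fun _ => M) i c := by
  ext m
  rcases eq_or_ne m i with rfl | hm
  · simp
  · obtain ⟨l, rfl⟩ := Fin.exists_succAbove_eq hm
    simp [hm]

theorem integral_pd_eq_zero_of_periodic {g : (Fin 3 → ℝ) → ℝ} (hg : ContDiff ℝ 1 g)
    {a b : Fin 3 → ℝ} (hab : a ≤ b) {j : Fin 3}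
    (hper : Function.Periodic g (Pi.single j (b j - a j))) :
    ∫ x in Icc a b, pd j g x = 0 := by
  -- the divergence theorem for the vector field `g • eⱼ`
  set g' : Fin 3 → (Fin 3 → ℝ) → (Fin 3 → ℝ) →L[ℝ] ℝ := Pi.single j (fderiv ℝ g)
  have hsum : ∀ x, ∑ i, g' i x (Pi.single i 1) = pd j g x := fun x => by
    rw [Fintype.sum_eq_single j fun i hij => by simp [g', Pi.single_eq_of_ne hij]]
    simp [g', pd]
  have hdiv := integral_divergence_of_hasFDerivAt_off_countable' a b hab (Pi.single j g) g' ∅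
    countable_empty (fun i => ?_) (fun x _ i => ?_) (by simpa only [hsum] using
      (continuous_pd hg j).integrableOn_Icc)
  · rw [funext hsum] at hdiv
    refine hdiv.trans (Finset.sum_eq_zero fun i _ => ?_)
    rcases eq_or_ne i j with rfl | hij
    · have hfaces : ∀ y, g (i.insertNth (b i) y) = g (i.insertNth (a i) y) := fun y => by
        rw [← hper (i.insertNth (a i) y), ← Fin.insertNth_add_single, add_sub_cancel]
      simp [hfaces]
    · simp [Pi.single_eq_of_ne hij]
  · rcases eq_or_ne i j with rfl | hij
    · simpa using hg.continuous.continuousOn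
    · simpa [Pi.single_eq_of_ne hij] using continuous_zero.continuousOn
  · rcases eq_or_ne i j with rfl | hij
    · simpa [g'] using (hg.differentiable one_ne_zero x).hasFDerivAt
    · simpa [g', Pi.single_eq_of_ne hij] using hasFDerivAt_zero x

noncomputable def divergence (v : (Fin 3 → ℝ) → Fin 3 → ℝ) (x : Fin 3 → ℝ) : ℝ :=
  ∑ j : Fin 3, pd j (fun y => v y j) x

section Divergence

variable {v : (Fin 3 → ℝ) → Fin 3 → ℝ}

theorem continuous_divergence (hv : ContDiff ℝ 1 v) : Continuous (divergence v) :=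
  continuous_finsetSum _ fun j _ => continuous_pd (contDiff_pi.1 hv j) j

theorem divergence_pd_eq_zero (hv : ContDiff ℝ 2 v) (hdiv : ∀ x, divergence v x = 0) (k : Fin 3)
    (x : Fin 3 → ℝ) : divergence (fun y j => pd k (fun z => v z j) y) x = 0 := by
  have hvj := contDiff_pi.1 hv
  calc divergence (fun y j => pd k (fun z => v z j) y) x
      = ∑ j, pd k (pd j fun z => v z j) x :=
        Finset.sum_congr rfl fun j _ => pd_comm (hvj j) j k
    _ = pd k (divergence v) x := by
        refine (pd_sum _ _ fun j _ => ?_).symm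
        exact (contDiff_pd (hvj j) (m := 1) (by norm_num) j).differentiable one_ne_zero _
    _ = 0 := by rw [funext hdiv, pd_const]

theorem integral_divergence_eq_zero_of_periodic (hv : ContDiff ℝ 1 v) {a b : Fin 3 → ℝ}
    (hab : a ≤ b) (hper : ∀ j, Function.Periodic v (Pi.single j (b j - a j))) :
    ∫ x in Icc a b, divergence v x = 0 := by
  have hvj := contDiff_pi.1 hv
  rw [show (fun x => divergence v x) = fun x => ∑ j, pd j (fun y => v y j) x from rfl,
    integral_finsetSum _ fun j _ => (continuous_pd (hvj j) j).integrableOn_Icc]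
  exact Finset.sum_eq_zero fun j _ =>
    integral_pd_eq_zero_of_periodic (hvj j) hab ((hper j).comp (· j))

end Divergence

noncomputable def advectionFluxAlong (a w : (Fin 3 → ℝ) → Fin 3 → ℝ) (k : Fin 3)
    (y : Fin 3 → ℝ) : ℝ :=
  ∑ i : Fin 3, (∑ j : Fin 3, a y j * pd j (fun z => w z i) y) * pd k (fun z => w z i) y

noncomputable def advectionFlux (a w : (Fin 3 → ℝ) → Fin 3 → ℝ) (k : Fin 3)
    (y : Fin 3 → ℝ) (j : Fin 3) : ℝ :=
  1 / 2 * (a y j * ∑ i : Fin 3, pd k (fun z => w z i) y * pd k (fun z => w z i) y)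
    + pd k (fun z => a z j) y * ∑ i : Fin 3, pd k (fun z => w z i) y * w y i

section AdvectionFlux

variable {a w : (Fin 3 → ℝ) → Fin 3 → ℝ} (k : Fin 3)

theorem contDiff_advectionFluxAlong (ha : ContDiff ℝ 1 a) (hw : ContDiff ℝ 2 w) :
    ContDiff ℝ 1 (advectionFluxAlong a w k) := by
  have hpdw (j i : Fin 3) : ContDiff ℝ 1 (pd j fun z => w z i) :=
    contDiff_pd (contDiff_pi.1 hw i) (by norm_num) j
  exact ContDiff.sum fun i _ =>
    (ContDiff.sum fun j _ => (contDiff_pi.1 ha j).mul (hpdw j i)).mul (hpdw k i)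

theorem contDiff_advectionFlux (ha : ContDiff ℝ 2 a) (hw : ContDiff ℝ 2 w) :
    ContDiff ℝ 1 (advectionFlux a w k) := by
  have hpdw (i : Fin 3) : ContDiff ℝ 1 (pd k fun z => w z i) :=
    contDiff_pd (contDiff_pi.1 hw i) (by norm_num) k
  refine contDiff_pi.2 fun j => ?_
  exact (contDiff_const.mul (((contDiff_pi.1 ha j).of_le one_le_two).mul
      (ContDiff.sum fun i _ => (hpdw i).mul (hpdw i)))).add
    ((contDiff_pd (contDiff_pi.1 ha j) (by norm_num) k).mul
      (ContDiff.sum fun i _ => (hpdw i).mul ((contDiff_pi.1 hw i).of_le one_le_two)))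

theorem periodic_advectionFluxAlong {c : Fin 3 → ℝ} (ha : Function.Periodic a c)
    (hw : Function.Periodic w c) : Function.Periodic (advectionFluxAlong a w k) c := by
  have hpdw (j i : Fin 3) : Function.Periodic (pd j fun z => w z i) c := (hw.comp (· i)).pd j
  intro x
  simp only [advectionFluxAlong, ha x, hpdw _ _ x]

theorem periodic_advectionFlux {c : Fin 3 → ℝ} (ha : Function.Periodic a c)
    (hw : Function.Periodic w c) : Function.Periodic (advectionFlux a w k) c := by
  have hpda (j : Fin 3) : Function.Periodic (pd k fun z => a z j) c := (ha.comp (· j)).pd k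
  have hpdw (i : Fin 3) : Function.Periodic (pd k fun z => w z i) c := (hw.comp (· i)).pd k
  intro x
  funext j
  simp only [advectionFlux, ha x, hw x, hpda _ x, hpdw _ x]

end AdvectionFlux

theorem advection_mul_pd_pd_eq {a w : (Fin 3 → ℝ) → Fin 3 → ℝ} (k : Fin 3)
    (ha : ContDiff ℝ 2 a) (hw : ContDiff ℝ 2 w) (hdiv : ∀ x, divergence a x = 0)
    (x : Fin 3 → ℝ) :
    ∑ i : Fin 3, (∑ j : Fin 3, a x j * pd j (fun y => w y i) x)
        * pd k (fun y => pd k (fun z => w z i) y) x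
      = ∑ i : Fin 3, (∑ j : Fin 3, pd k (fun y => a y j) x
            * pd j (fun y => pd k (fun z => w z i) y) x) * w x i
        + (pd k (advectionFluxAlong a w k) x - divergence (advectionFlux a w k) x) := by
  have hdiv_pd_a := divergence_pd_eq_zero ha hdiv k x
  have hdiv_a := hdiv x
  have hda (j : Fin 3) : Differentiable ℝ fun z => a z j :=
    (contDiff_pi.1 ha j).differentiable two_ne_zero
  have hdw (i : Fin 3) : Differentiable ℝ fun z => w z i :=
    (contDiff_pi.1 hw i).differentiable two_ne_zero
  have hdpda (l j : Fin 3) : Differentiable ℝ (pd l fun z => a z j) :=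
    (contDiff_pd (contDiff_pi.1 ha j) (m := 1) (by norm_num) l).differentiable one_ne_zero
  have hdpdw (l i : Fin 3) : Differentiable ℝ (pd l fun z => w z i) :=
    (contDiff_pd (contDiff_pi.1 hw i) (m := 1) (by norm_num) l).differentiable one_ne_zero
  have hsymm (j i : Fin 3) : pd k (pd j fun z => w z i) x = pd j (pd k fun z => w z i) x :=
    pd_comm (contDiff_pi.1 hw i) k j
  unfold advectionFluxAlong advectionFlux divergence at *
  simp (disch := fun_prop) only [pd_sum, pd_mul, pd_add, pd_const]
  simp only [hsymm, Fin.sum_univ_three] at hdiv_a hdiv_pd_a ⊢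
  linear_combination
    (1 / 2 * (pd k (fun z => w z 0) x * pd k (fun z => w z 0) x
      + pd k (fun z => w z 1) x * pd k (fun z => w z 1) x
      + pd k (fun z => w z 2) x * pd k (fun z => w z 2) x)) * hdiv_a
    + (pd k (fun z => w z 0) x * w x 0 + pd k (fun z => w z 1) x * w x 1
      + pd k (fun z => w z 2) x * w x 2) * hdiv_pd_a

/-- Integration-by-parts identity used for the `H¹` estimate: for a C²
periodic divergence-free `a` and a C³ periodic `w`,
`∫_Q ((a·∇)w)·(∂ₖ∂ₖw) = ∫_Q (((∂ₖa)·∇)(∂ₖw))·w`. -/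
theorem advection_second_derivative_identity
    (a w : (Fin 3 → ℝ) → Fin 3 → ℝ) (k : Fin 3)
    (ha : ContDiff ℝ 2 a) (hw : ContDiff ℝ 3 w)
    (ha_per : ∀ x, ∀ j : Fin 3, a (x + Pi.single j (2 * Real.pi)) = a x)
    (hw_per : ∀ x, ∀ j : Fin 3, w (x + Pi.single j (2 * Real.pi)) = w x)
    (ha_div : ∀ x, ∑ j : Fin 3, pd j (fun y => a y j) x = 0) :
    (∫ x in Set.univ.pi fun _ : Fin 3 => Set.Icc (0 : ℝ) (2 * Real.pi),
        ∑ i : Fin 3, (∑ j : Fin 3, a x j * pd j (fun y => w y i) x)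
          * pd k (fun y => pd k (fun z => w z i) y) x)
      = ∫ x in Set.univ.pi fun _ : Fin 3 => Set.Icc (0 : ℝ) (2 * Real.pi),
          ∑ i : Fin 3,
            (∑ j : Fin 3, pd k (fun y => a y j) x
              * pd j (fun y => pd k (fun z => w z i) y) x) * w x i := by
  have hw2 : ContDiff ℝ 2 w := hw.of_le (by norm_num)
  have hcell : (univ.pi fun _ : Fin 3 => Icc (0 : ℝ) (2 * π)) = Icc 0 fun _ => 2 * π :=
    pi_univ_Icc 0 fun _ => 2 * π
  have hle : (0 : Fin 3 → ℝ) ≤ fun _ => 2 * π := fun _ => by positivity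
  have hF := contDiff_advectionFluxAlong k (ha.of_le one_le_two) hw2
  have hP := contDiff_advectionFlux k ha hw2
  have hF' := continuous_pd hF k
  have hP' := continuous_divergence hP
  have hR : Continuous fun x => ∑ i : Fin 3, (∑ j : Fin 3, pd k (fun y => a y j) x
      * pd j (fun y => pd k (fun z => w z i) y) x) * w x i := by
    have hpda (j : Fin 3) : Continuous (pd k fun y => a y j) :=
      continuous_pd ((contDiff_pi.1 ha j).of_le one_le_two) k
    have hpdw (j i : Fin 3) : Continuous (pd j fun y => pd k (fun z => w z i) y) :=
      continuous_pd (contDiff_pd (contDiff_pi.1 hw2 i) (by norm_num) k) j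
    have := hw.continuous
    fun_prop
  rw [hcell, setIntegral_congr_fun measurableSet_Icc fun x _ =>
      advection_mul_pd_pd_eq k ha hw2 ha_div x,
    integral_add hR.integrableOn_Icc ?_, integral_sub hF'.integrableOn_Icc hP'.integrableOn_Icc,
    integral_pd_eq_zero_of_periodic hF hle
      (by simpa using periodic_advectionFluxAlong k (ha_per · k) (hw_per · k)),
    integral_divergence_eq_zero_of_periodic hP hle
      fun j => by simpa using periodic_advectionFlux k (ha_per · j) (hw_per · j),
    sub_zero, add_zero]
  exact (hF'.sub hP').integrableOn_Icc
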